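/- arXiv:2505.06846 — 3 statements merged into one kernel-verified Lean document; each statement's English description precedes it below -/
import Mathlib

section
/- Let A be a compact first-countable topological space, Ω a measurable space, u : A × Ω → ℝ such that {u(·,ω) : ω ∈ Ω} is equicontinuous on A and u(a,·) is measurable and integrable with respect to a family of probability measures (m_a)_{a∈A}. Assume that for every m_a-integrable function g and every sequence a_n → a, ∫ g dm_a ≥ limsup_n ∫ g dm_{a_n}. Then the expected utility v(a) = ∫ u(a,ω) dm_a(ω) attains a maximum on A. -/
open MeasureTheory Filter Topology

/-- In `ℝ`, if a sequence is not bounded above along `atTop`, its `limsup` is the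
junk value `0` (since `sInf ∅ = 0` in `ℝ`). -/
private lemma real_limsup_of_not_bddAbove {u : ℕ → ℝ}
    (h : ¬ Filter.IsBoundedUnder (· ≤ ·) atTop u) :
    Filter.limsup u atTop = 0 := by
  rw [Filter.limsup_eq]
  convert Real.sInf_empty using 2
  · rfl
  rw [Set.eq_empty_iff_forall_notMem]
  intro a ha
  exact h ⟨a, eventually_map.2 ha⟩

theorem expected_utility_max_exists
    {A : Type*} [TopologicalSpace A] [CompactSpace A]
    [FirstCountableTopology A] [Nonempty A]
    {Ω : Type*} [MeasurableSpace Ω]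
    (m : A → Measure Ω) (hm : ∀ a, IsProbabilityMeasure (m a))
    (u : A → Ω → ℝ)
    (hequi : Equicontinuous (fun ω a => u a ω))
    (hint : ∀ a, Integrable (u a) (m a))
    (husc : ∀ (g : Ω → ℝ) (a : A) (an : ℕ → A),
      Integrable g (m a) → Tendsto an atTop (𝓝 a) →
      Filter.limsup (fun n => ∫ ω, g ω ∂(m (an n))) atTop ≤ ∫ ω, g ω ∂(m a)) :
    ∃ a : A, ∀ b : A, ∫ ω, u b ω ∂(m b) ≤ ∫ ω, u a ω ∂(m a) := by
  haveI := hm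
  -- Key auxiliary fact: for any `g` integrable w.r.t. `m a` and any sequence
  -- `an → a`, the function `g` is eventually integrable w.r.t. `m (an n)`, and
  -- the integrals are bounded above.
  have key : ∀ (g : Ω → ℝ) (a : A) (an : ℕ → A), Integrable g (m a) →
      Tendsto an atTop (𝓝 a) →
      (∀ᶠ n in atTop, Integrable g (m (an n))) ∧
        Filter.IsBoundedUnder (· ≤ ·) atTop (fun n => ∫ ω, g ω ∂(m (an n))) := by
    intro g a an hg ha
    haveI := hm a
    set C : ℝ := (∫ ω, g ω ∂(m a)) + 1 with hCdef
    have hgC : Integrable (fun ω => g ω - C) (m a) := hg.sub (integrable_const C)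
    have hC : ∫ ω, (g ω - C) ∂(m a) = -1 := by
      rw [integral_sub hg (integrable_const C), integral_const]
      simp [measure_univ, hCdef]
    have husc' := husc (fun ω => g ω - C) a an hgC ha
    rw [hC] at husc'
    have hev : ∀ᶠ n in atTop, Integrable g (m (an n)) := by
      by_contra hcon
      have hfreq : ∃ᶠ n in atTop, ¬ Integrable g (m (an n)) :=
        Filter.not_eventually.mp hcon
      have hfreq0 : ∃ᶠ n in atTop, (0 : ℝ) ≤ ∫ ω, (g ω - C) ∂(m (an n)) := by
        refine hfreq.mono fun n hn => ?_
        have hnotint : ¬ Integrable (fun ω => g ω - C) (m (an n)) := by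
          haveI := hm (an n)
          intro h
          exact hn ((integrable_add_const_iff (c := -C)).mp (by simpa [sub_eq_add_neg] using h))
        simp [integral_undef hnotint]
      rcases em (Filter.IsBoundedUnder (· ≤ ·) atTop
          (fun n => ∫ ω, (g ω - C) ∂(m (an n)))) with hb | hb
      · have h0 := le_limsup_of_frequently_le hfreq0 hb
        linarith [h0.trans husc']
      · rw [real_limsup_of_not_bddAbove hb] at husc'
        linarith
    refine ⟨hev, ?_⟩
    by_contra hb
    have hb' : ¬ Filter.IsBoundedUnder (· ≤ ·) atTop
        (fun n => ∫ ω, (g ω - C) ∂(m (an n))) := by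
      rintro ⟨b, hb2⟩
      apply hb
      refine ⟨b + C, eventually_map.2 ?_⟩
      filter_upwards [hev, eventually_map.1 hb2] with n hn h2
      haveI := hm (an n)
      have heq : ∫ ω, (g ω - C) ∂(m (an n)) = (∫ ω, g ω ∂(m (an n))) - C := by
        rw [integral_sub hn (integrable_const C), integral_const]
        simp [measure_univ]
      linarith
    rw [real_limsup_of_not_bddAbove hb'] at husc'
    linarith
  -- The expected utility is (sequentially, hence topologically) upper
  -- semicontinuous: its superlevel sets are closed.
  have hclosed : ∀ c : ℝ, IsClosed {a : A | c ≤ ∫ ω, u a ω ∂(m a)} := by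
    intro c
    apply IsSeqClosed.isClosed
    intro an a hmem htend
    have hls := husc (u a) a an (hint a) htend
    obtain ⟨hev, hbdd⟩ := key (u a) a an (hint a) htend
    show c ≤ ∫ ω, u a ω ∂(m a)
    by_contra hlt
    push_neg at hlt
    set ε : ℝ := (c - ∫ ω, u a ω ∂(m a)) / 2 with hεdef
    have hε : 0 < ε := by simp only [hεdef]; linarith
    have hU : ∀ᶠ b in 𝓝 a, ∀ ω, dist (u a ω) (u b ω) < ε := by
      have h := hequi a {p : ℝ × ℝ | dist p.1 p.2 < ε} (Metric.dist_mem_uniformity hε)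
      exact h
    have hev2 : ∀ᶠ n in atTop, ∀ ω, dist (u a ω) (u (an n) ω) < ε :=
      htend.eventually hU
    have hlow : ∀ᶠ n in atTop, c - ε ≤ ∫ ω, u a ω ∂(m (an n)) := by
      filter_upwards [hev, hev2] with n hn h2
      haveI := hm (an n)
      have hmono : ∫ ω, u (an n) ω ∂(m (an n)) ≤ ∫ ω, (u a ω + ε) ∂(m (an n)) := by
        refine integral_mono (hint (an n)) (hn.add (integrable_const ε)) fun ω => ?_
        have h3 := h2 ω
        rw [Real.dist_eq] at h3
        have h4 := abs_lt.1 h3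
        linarith [h4.1, h4.2]
      have heq : ∫ ω, (u a ω + ε) ∂(m (an n)) = (∫ ω, u a ω ∂(m (an n))) + ε := by
        rw [integral_add hn (integrable_const ε), integral_const]
        simp [measure_univ]
      have hc : c ≤ ∫ ω, u (an n) ω ∂(m (an n)) := hmem n
      linarith
    have hfin := le_limsup_of_frequently_le hlow.frequently hbdd
    have := hfin.trans hls
    simp only [hεdef] at this
    linarith
  -- Conclude with a finite-intersection-property compactness argument.
  have hne : (⋂ b : A,
      {a : A | ∫ ω, u b ω ∂(m b) ≤ ∫ ω, u a ω ∂(m a)}).Nonempty := by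
    apply IsCompact.nonempty_iInter_of_directed_nonempty_isCompact_isClosed
    · intro b b'
      rcases le_total (∫ ω, u b ω ∂(m b)) (∫ ω, u b' ω ∂(m b')) with h | h
      · exact ⟨b', fun a ha => le_trans h ha, fun a ha => ha⟩
      · exact ⟨b, fun a ha => ha, fun a ha => le_trans h ha⟩
    · intro b
      refine ⟨b, ?_⟩
      simp only [Set.mem_setOf_eq]
      exact le_rfl
    · intro b; exact (hclosed _).isCompact
    · intro b; exact hclosed _
  obtain ⟨a, ha⟩ := hne
  exact ⟨a, fun b => Set.mem_iInter.1 ha b⟩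
end

section
/- Under the assumptions of the existence theorem (A compact first-countable, equicontinuity of {u(·,ω)}, integrability, and the upper semi-continuity condition on the measures m_a), the function v(a) = ∫ u(a,ω) dm_a(ω) is sequentially upper semi-continuous: for every sequence a_n → a, v(a) ≥ limsup_n v(a_n). -/
open MeasureTheory Filter Topology

/-- If a real sequence has no eventual upper bound, its (junk) limsup is `0`. -/
lemma limsup_of_no_bound (w : ℕ → ℝ) (h : ¬∃ b : ℝ, ∀ᶠ n in atTop, w n ≤ b) :
    Filter.limsup w atTop = 0 := by
  rw [Filter.limsup_eq]
  have : {a : ℝ | ∀ᶠ n in atTop, w n ≤ a} = ∅ := by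
    ext x
    simp only [Set.mem_setOf_eq, Set.mem_empty_iff_false, iff_false]
    exact fun hx => h ⟨x, hx⟩
  rw [this, Real.sInf_empty]

/-- Key real-limsup comparison lemma, robust to junk-value conventions. -/
lemma limsup_le_of_close (c v : ℕ → ℝ) (L : ℝ)
    (hv : Filter.limsup v atTop ≤ L)
    (h1 : ∀ ε : ℝ, 0 < ε → ∀ᶠ n in atTop, c n ≤ v n + ε)
    (h2 : ∀ ε : ℝ, 0 < ε → ∀ᶠ n in atTop, v n ≤ c n + ε) :
    Filter.limsup c atTop ≤ L := by
  set Sc := {a : ℝ | ∀ᶠ n in atTop, c n ≤ a} with hSc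
  set Sv := {a : ℝ | ∀ᶠ n in atTop, v n ≤ a} with hSv
  by_cases hcb : ∃ b : ℝ, ∀ᶠ n in atTop, c n ≤ b
  · -- Sc nonempty
    by_cases hbb : BddBelow Sc
    · -- main case
      rw [Filter.limsup_eq]
      have key : ∀ ε : ℝ, 0 < ε → Filter.limsup c atTop ≤ L + 2 * ε := by
        intro ε hε
        -- first: eventually v n ≤ L + ε
        have hev : ∀ᶠ n in atTop, v n ≤ L + ε := by
          by_cases hvb : ∃ b : ℝ, ∀ᶠ n in atTop, v n ≤ b
          · by_cases hvbb : BddBelow Sv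
            · -- limsup v = sInf Sv ≤ L, so some member of Sv is < L + ε
              have hne : Sv.Nonempty := hvb
              have hlv : sInf Sv ≤ L := by rw [Filter.limsup_eq] at hv; exact hv
              by_contra hcon
              have hall : ∀ x ∈ Sv, L + ε ≤ x := by
                intro x hx
                by_contra hlt
                push_neg at hlt
                exact hcon (hx.mono fun n hn => hn.trans hlt.le)
              have : L + ε ≤ sInf Sv := le_csInf hne hall
              linarith
            · -- Sv not bounded below: v eventually below everything
              have := Real.sInf_of_not_bddBelow hvbb
              obtain ⟨x, hx, hxl⟩ := not_bddBelow_iff.mp hvbb (L + ε)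
              exact hx.mono fun n hn => hn.trans hxl.le
          · -- Sv empty, but Sc nonempty gives Sv nonempty: contradiction
            exfalso
            obtain ⟨b, hb⟩ := hcb
            exact hvb ⟨b + 1, ((h2 1 one_pos).and hb).mono fun n ⟨hn1, hn2⟩ => by linarith⟩
        have hec : ∀ᶠ n in atTop, c n ≤ L + 2 * ε :=
          ((h1 ε hε).and hev).mono fun n ⟨hn1, hn2⟩ => by linarith
        rw [Filter.limsup_eq]
        exact csInf_le hbb hec
      rw [← Filter.limsup_eq]
      refine le_of_forall_pos_le_add fun ε hε => ?_
      have := key (ε / 2) (by linarith)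
      linarith
    · -- Sc not bounded below: c → -∞ junk case, limsup c = 0, need 0 ≤ L
      have hlc : Filter.limsup c atTop = 0 := by
        rw [Filter.limsup_eq, Real.sInf_of_not_bddBelow hbb]
      rw [hlc]
      -- then Sv = univ so limsup v = 0 ≤ L
      have hvub : ¬BddBelow Sv := by
        intro ⟨lb, hlb⟩
        apply hbb
        refine ⟨lb - 1, fun x hx => ?_⟩
        have : x + 1 ∈ Sv := (h2 1 one_pos).and hx |>.mono fun n ⟨hn1, hn2⟩ => by linarith
        have := hlb this
        linarith
      have : Filter.limsup v atTop = 0 := by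
        rw [Filter.limsup_eq, Real.sInf_of_not_bddBelow hvub]
      linarith [hv, this]
  · -- Sc empty: limsup c = 0, and Sv empty too so limsup v = 0 ≤ L
    rw [limsup_of_no_bound c hcb]
    have hvub : ¬∃ b : ℝ, ∀ᶠ n in atTop, v n ≤ b := by
      rintro ⟨b, hb⟩
      exact hcb ⟨b + 1, ((h1 1 one_pos).and hb).mono fun n ⟨hn1, hn2⟩ => by linarith⟩
    rw [limsup_of_no_bound v hvub] at hv
    exact hv

theorem expected_utility_seq_usc
    {A : Type*} [TopologicalSpace A] [CompactSpace A] [FirstCountableTopology A]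
    {Ω : Type*} [MeasurableSpace Ω]
    (m : A → Measure Ω) (hm : ∀ a, IsProbabilityMeasure (m a))
    (u : A → Ω → ℝ)
    (hequi : Equicontinuous (fun ω a => u a ω))
    (hint : ∀ a, Integrable (u a) (m a))
    (husc : ∀ (g : Ω → ℝ) (a : A) (an : ℕ → A),
      Integrable g (m a) → Tendsto an atTop (𝓝 a) →
      Filter.limsup (fun n => ∫ ω, g ω ∂(m (an n))) atTop ≤ ∫ ω, g ω ∂(m a)) :
    ∀ (a : A) (an : ℕ → A), Tendsto an atTop (𝓝 a) →
      Filter.limsup (fun n => ∫ ω, u (an n) ω ∂(m (an n))) atTop ≤ ∫ ω, u a ω ∂(m a) := by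
  intro a an han
  haveI := hm a
  set L : ℝ := ∫ ω, u a ω ∂(m a) with hL
  set c : ℕ → ℝ := fun n => ∫ ω, u (an n) ω ∂(m (an n)) with hc
  set v : ℕ → ℝ := fun n => ∫ ω, u a ω ∂(m (an n)) with hvdef
  -- equicontinuity at a
  have hequiv : ∀ ε : ℝ, 0 < ε → ∀ᶠ n in atTop, ∀ ω, dist (u a ω) (u (an n) ω) < ε := by
    intro ε hε
    have h := (Metric.equicontinuousAt_iff_right.mp (hequi a)) ε hε
    exact han.eventually h
  -- Step A: eventually u a is AEStronglyMeasurable wrt m (an n)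
  have hmeas : ∀ᶠ n in atTop, AEStronglyMeasurable (u a) (m (an n)) := by
    by_contra hbad
    have hfreq : ∃ᶠ n in atTop, ¬AEStronglyMeasurable (u a) (m (an n)) :=
      Filter.not_eventually.mp hbad
    set t : ℝ := 1 - L with ht
    set g : Ω → ℝ := fun ω => -(u a ω + t) with hg
    have hgint : Integrable g (m a) := ((hint a).add (integrable_const t)).neg
    have hgval : ∫ ω, g ω ∂(m a) = -1 := by
      rw [hg]
      rw [integral_neg, integral_add (hint a) (integrable_const t), integral_const]
      simp only [probReal_univ, ENNReal.toReal_one, one_smul, ht, ← hL]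
      ring
    have hw := husc g a an hgint han
    rw [hgval] at hw
    set w : ℕ → ℝ := fun n => ∫ ω, g ω ∂(m (an n)) with hwdef
    have hwzero : ∃ᶠ n in atTop, w n = 0 := by
      refine hfreq.mono fun n hn => ?_
      have : ¬Integrable g (m (an n)) := by
        intro hgi
        apply hn
        have : AEStronglyMeasurable (fun ω => -(g ω) - t) (m (an n)) :=
          (hgi.aestronglyMeasurable.neg).sub aestronglyMeasurable_const
        convert this using 1
        funext ω
        simp [hg]
      simp only [hwdef]
      exact integral_undef this
    by_cases hb : ∃ b : ℝ, ∀ᶠ n in atTop, w n ≤ b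
    · obtain ⟨b, hbb⟩ := hb
      have h0 : (0 : ℝ) ≤ Filter.limsup w atTop := by
        apply Filter.le_limsup_of_frequently_le
        · exact hwzero.mono fun n hn => hn.ge
        · exact ⟨b, Filter.eventually_map.mpr hbb⟩
      linarith
    · rw [limsup_of_no_bound w hb] at hw
      linarith
  -- Step B/C: ε-comparison between c and v, conclude via helper lemma
  have hv : Filter.limsup v atTop ≤ L := husc (u a) a an (hint a) han
  refine limsup_le_of_close c v L hv ?_ ?_
  · intro ε hε
    filter_upwards [hmeas, hequiv ε hε] with n hn1 hn2
    haveI := hm (an n)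
    have huaint : Integrable (u a) (m (an n)) := by
      refine Integrable.mono' (((hint (an n)).abs).add (integrable_const ε)) hn1 ?_
      refine Filter.Eventually.of_forall fun ω => ?_
      have := hn2 ω
      rw [Real.dist_eq] at this
      simp only [Real.norm_eq_abs, Pi.add_apply]
      have h1 : |u a ω| - |u (an n) ω| ≤ |u a ω - u (an n) ω| :=
        abs_sub_abs_le_abs_sub _ _
      linarith [this, h1]
    have hmono : c n ≤ ∫ ω, (u a ω + ε) ∂(m (an n)) := by
      refine integral_mono (hint (an n)) (huaint.add (integrable_const ε)) fun ω => ?_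
      have := hn2 ω
      rw [Real.dist_eq] at this
      have := abs_lt.mp this
      linarith [this.1, this.2]
    have : ∫ ω, (u a ω + ε) ∂(m (an n)) = v n + ε := by
      rw [integral_add huaint (integrable_const ε), integral_const]
      simp
      rfl
    linarith [hmono, this.le, this.ge]
  · intro ε hε
    filter_upwards [hmeas, hequiv ε hε] with n hn1 hn2
    haveI := hm (an n)
    have huaint : Integrable (u a) (m (an n)) := by
      refine Integrable.mono' (((hint (an n)).abs).add (integrable_const ε)) hn1 ?_
      refine Filter.Eventually.of_forall fun ω => ?_
      have := hn2 ω
      rw [Real.dist_eq] at this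
      simp only [Real.norm_eq_abs, Pi.add_apply]
      have h1 : |u a ω| - |u (an n) ω| ≤ |u a ω - u (an n) ω| :=
        abs_sub_abs_le_abs_sub _ _
      linarith [this, h1]
    have hmono : v n ≤ ∫ ω, (u (an n) ω + ε) ∂(m (an n)) := by
      refine integral_mono huaint ((hint (an n)).add (integrable_const ε)) fun ω => ?_
      have := hn2 ω
      rw [Real.dist_eq] at this
      have := abs_lt.mp this
      linarith [this.1, this.2]
    have : ∫ ω, (u (an n) ω + ε) ∂(m (an n)) = c n + ε := by
      rw [integral_add (hint (an n)) (integrable_const ε), integral_const]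
      simp
      rfl
    linarith [hmono, this.le]
end

section
/- Example 2 violates Assumption 4 but admits a maximizer for increasing utilities: With A = [0,2], Ω = {0,1}, m_a = (1/2)δ_0 + (1/2)δ_1 for a < 1 and m_a = δ_1 for a ≥ 1: (i) the condition ∫ g dm_a ≥ limsup_n ∫ g dm_{a_n} fails (take g(ω) = −ω, a_n = 1 − 1/n → 1: limsup ∫ g dm_{a_n} = −1/2 > −1 = ∫ g dm_1); (ii) nevertheless, for every continuous u : A × Ω → ℝ that is monotone increasing in ω for each fixed a, v(a) = ∫ u(a,ω)dm_a(ω) is upper semi-continuous on A and attains a maximum. -/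
open MeasureTheory Filter Topology
open scoped ENNReal

/-- The choice-dependent measure of Example 2: a mix of Dirac measures at 0 and 1
for `a < 1`, and the Dirac measure at 1 for `a ≥ 1`. -/
noncomputable def exampleTwoMeasure (a : ℝ) : Measure ℝ :=
  if a < 1 then
    (1/2 : ℝ≥0∞) • Measure.dirac (0:ℝ) + (1/2 : ℝ≥0∞) • Measure.dirac (1:ℝ)
  else Measure.dirac (1:ℝ)

lemma integrableDiracAux (f : ℝ → ℝ) (a : ℝ) : Integrable f (Measure.dirac a) :=
  (integrable_const (f a)).congr (ae_eq_dirac f).symm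

lemma integral_etm (f : ℝ → ℝ) (a : ℝ) :
    ∫ ω, f ω ∂(exampleTwoMeasure a) = if a < 1 then (f 0 + f 1)/2 else f 1 := by
  unfold exampleTwoMeasure
  split_ifs
  · rw [integral_add_measure ((integrableDiracAux f 0).smul_measure (by norm_num))
      ((integrableDiracAux f 1).smul_measure (by norm_num)),
      integral_smul_measure, integral_smul_measure, integral_dirac, integral_dirac]
    norm_num
    ring
  · exact integral_dirac f 1

theorem example_two_violates_usc_but_maximizer_exists :
    -- (i) Assumption 4 fails for g(ω) = -ω along aₙ = 1 - 1/(n+1) → 1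
    (Filter.limsup
        (fun n : ℕ => ∫ ω : ℝ, -ω ∂(exampleTwoMeasure (1 - 1/(n+1)))) atTop
      = -(1/2) ∧
     (∫ ω : ℝ, -ω ∂(exampleTwoMeasure 1)) = -1 ∧
     ¬ (∫ ω : ℝ, -ω ∂(exampleTwoMeasure 1)) ≥
        Filter.limsup
          (fun n : ℕ => ∫ ω : ℝ, -ω ∂(exampleTwoMeasure (1 - 1/(n+1)))) atTop) ∧
    -- (ii) nevertheless, for utilities increasing in ω the value function is
    -- upper semi-continuous and attains a maximum on A = [0, 2]
    (∀ u : ℝ → ℝ → ℝ,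
      Continuous (fun a => u a 0) → Continuous (fun a => u a 1) →
      (∀ a, u a 0 ≤ u a 1) →
      UpperSemicontinuousOn (fun a => ∫ ω : ℝ, u a ω ∂(exampleTwoMeasure a))
        (Set.Icc (0:ℝ) 2) ∧
      ∃ a ∈ Set.Icc (0:ℝ) 2, ∀ b ∈ Set.Icc (0:ℝ) 2,
        (∫ ω : ℝ, u b ω ∂(exampleTwoMeasure b)) ≤
          ∫ ω : ℝ, u a ω ∂(exampleTwoMeasure a)) := by
  have hconst : (fun n : ℕ => ∫ ω : ℝ, -ω ∂(exampleTwoMeasure (1 - 1/(n+1))))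
      = fun _ : ℕ => (-(1/2) : ℝ) := by
    funext n
    rw [integral_etm (fun ω => -ω)]
    have h1 : (1:ℝ) - 1/(n+1) < 1 := by
      have : (0:ℝ) < 1/(n+1) := by positivity
      linarith
    rw [if_pos h1]; norm_num
  have hlimsup : Filter.limsup
      (fun n : ℕ => ∫ ω : ℝ, -ω ∂(exampleTwoMeasure (1 - 1/(n+1)))) atTop
      = -(1/2) := by
    rw [hconst]; exact limsup_const _
  have hint1 : (∫ ω : ℝ, -ω ∂(exampleTwoMeasure 1)) = -1 := by
    rw [integral_etm (fun ω => -ω), if_neg (by norm_num)]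
  refine ⟨⟨hlimsup, hint1, ?_⟩, ?_⟩
  · rw [hlimsup, hint1]; norm_num
  · intro u hu0 hu1 hmono
    set h : ℝ → ℝ := fun a => (u a 0 + u a 1)/2 with hh
    set g : ℝ → ℝ := fun a => u a 1 with hg
    have hhc : Continuous h := by continuity
    have hgc : Continuous g := hu1
    have hv : ∀ a, (∫ ω : ℝ, u a ω ∂(exampleTwoMeasure a))
        = if a < 1 then h a else g a := fun a => integral_etm (fun ω => u a ω) a
    have hle : ∀ a, h a ≤ g a := by
      intro a; have := hmono a; simp only [hh, hg]; linarith
    have hvle : ∀ a, (∫ ω : ℝ, u a ω ∂(exampleTwoMeasure a)) ≤ g a := by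
      intro a; rw [hv a]; split_ifs with hA
      · exact hle a
      · exact le_refl _
    constructor
    · intro x _ y hy
      simp only at hy ⊢
      rw [hv x] at hy
      split_ifs at hy with hx
      · -- x < 1 : v = h near x
        have hev : ∀ᶠ b in 𝓝 x, h b < y ∧ b < 1 := by
          filter_upwards [hhc.continuousAt.eventually_lt continuous_const.continuousAt hy,
            Filter.tendsto_id.eventually_lt_const hx] with b hb1 hb2
          exact ⟨hb1, hb2⟩
        exact Filter.Eventually.filter_mono nhdsWithin_le_nhds <| by
          filter_upwards [hev] with b ⟨hb1, hb2⟩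
          rw [hv b, if_pos hb2]; exact hb1
      · -- x ≥ 1 : v ≤ g everywhere, and g x < y
        have hev : ∀ᶠ b in 𝓝 x, g b < y :=
          hgc.continuousAt.eventually_lt continuous_const.continuousAt hy
        exact Filter.Eventually.filter_mono nhdsWithin_le_nhds <| by
          filter_upwards [hev] with b hb
          exact lt_of_le_of_lt (hvle b) hb
    · -- maximizer
      obtain ⟨c, hc, hcmax⟩ := isCompact_Icc.exists_isMaxOn (Set.nonempty_Icc.2 (by norm_num))
        (hhc.continuousOn (s := Set.Icc (0:ℝ) 2))
      obtain ⟨d, hd, hdmax⟩ := isCompact_Icc.exists_isMaxOn (Set.nonempty_Icc.2 (by norm_num))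
        (hgc.continuousOn (s := Set.Icc (1:ℝ) 2))
      have hd02 : d ∈ Set.Icc (0:ℝ) 2 := ⟨by linarith [hd.1], hd.2⟩
      have hvd : (∫ ω : ℝ, u d ω ∂(exampleTwoMeasure d)) = g d := by
        rw [hv d, if_neg (not_lt.2 hd.1)]
      have hvc : h c ≤ (∫ ω : ℝ, u c ω ∂(exampleTwoMeasure c)) := by
        rw [hv c]; split_ifs with hc1
        · exact le_refl _
        · exact hle c
      rcases le_total (∫ ω : ℝ, u c ω ∂(exampleTwoMeasure c))
        (∫ ω : ℝ, u d ω ∂(exampleTwoMeasure d)) with hcd | hcd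
      · refine ⟨d, hd02, fun b hb => ?_⟩
        rw [hv b]; split_ifs with hb1
        · calc h b ≤ h c := hcmax hb
            _ ≤ _ := le_trans hvc hcd
        · rw [hvd]; exact hdmax ⟨not_lt.1 hb1, hb.2⟩
      · refine ⟨c, hc, fun b hb => ?_⟩
        rw [hv b]; split_ifs with hb1
        · exact le_trans (hcmax hb) hvc
        · calc g b ≤ g d := hdmax ⟨not_lt.1 hb1, hb.2⟩
            _ = _ := hvd.symm
            _ ≤ _ := hcd
end
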